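/- For every j ≥ 1, the tail sum Σ_{i=2j+1}^∞ (p_i + p_{i+1})/p_i² is strictly less than 2(2+√2)/r^{2j} + 1/(8·r^{6j}), where r = 1+√2. -/

import Mathlib

/-!
With `r = 1 + √2`, Binet's formula reads `2√2 pₙ = rⁿ - (-1)ⁿ r⁻ⁿ`. Writing `a = rⁿ`, the term
`(pₙ + pₙ₊₁) / pₙ²` is `4r / a` up to an error of order `a⁻³`, negative for odd `n` and positive
for even `n`. For odd `n` the errors of the terms `n` and `n + 1` cancel, so each such pair is at
most `4 (2 + √2) / rⁿ`. Summing over `n = 2j + 1, 2j + 3, …` gives a geometric series with ratio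
`r⁻²` and value `2 (2 + √2) / r^(2j)`, because `r² - 1 = 2r`.
-/

/-- The Pell numbers: `p 0 = 0`, `p 1 = 1`, `p 2 = 2`, `p (n+2) = 2 p (n+1) + p n`. -/
def pell : ℕ → ℤ
  | 0 => 0
  | 1 => 1
  | (n+2) => 2 * pell (n+1) + pell n

open Real

lemma one_sub_sqrt_two_eq : 1 - √2 = -(1 + √2)⁻¹ := by
  field_simp
  linear_combination -sq_sqrt zero_le_two

lemma two_mul_sqrt_two_mul_pell :
    ∀ n : ℕ, 2 * √2 * pell n = (1 + √2) ^ n - (1 - √2) ^ n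
  | 0 => by simp [pell]
  | 1 => by simp [pell]; ring
  | n + 2 => by
    have h₁ := two_mul_sqrt_two_mul_pell (n + 1)
    have h₀ := two_mul_sqrt_two_mul_pell n
    simp only [pell, Int.cast_add, Int.cast_mul, Int.cast_ofNat]
    linear_combination 2 * h₁ + h₀ - ((1 + √2) ^ n - (1 - √2) ^ n) * sq_sqrt zero_le_two

lemma pell_eq (n : ℕ) :
    (pell n : ℝ) = ((1 + √2) ^ n - (-1) ^ n * ((1 + √2) ^ n)⁻¹) / (2 * √2) := by
  rw [eq_div_iff (by positivity), mul_comm, two_mul_sqrt_two_mul_pell, one_sub_sqrt_two_eq,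
    neg_eq_neg_one_mul, mul_pow, inv_pow]

lemma pell_nonneg : ∀ n : ℕ, 0 ≤ pell n
  | 0 => le_rfl
  | 1 => zero_le_one
  | n + 2 => by
    have := pell_nonneg (n + 1)
    have := pell_nonneg n
    simp only [pell]
    positivity

noncomputable def pellTerm (n : ℕ) : ℝ := (pell n + pell (n + 1)) / (pell n : ℝ) ^ 2

lemma pellTerm_nonneg (n : ℕ) : 0 ≤ pellTerm n := by
  have := pell_nonneg n
  have := pell_nonneg (n + 1)
  unfold pellTerm
  positivity

lemma pellTerm_le_of_odd {n : ℕ} (hn : Odd n) :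
    pellTerm n ≤ 4 * (1 + √2) / (1 + √2) ^ n - (3 + √2) / ((1 + √2) ^ n) ^ 3 := by
  have ha : 1 ≤ (1 + √2) ^ n := one_le_pow₀ (le_add_of_nonneg_right (sqrt_nonneg 2))
  rw [pellTerm, pell_eq, pell_eq, hn.neg_one_pow, hn.add_one.neg_one_pow, pow_succ]
  simp only [neg_one_mul, sub_neg_eq_add, one_mul]
  generalize (1 + √2) ^ n = a at ha ⊢
  have hc : √2 ^ 2 = 2 := sq_sqrt zero_le_two
  have ha0 : 0 < a := by linarith
  have e : ((a + a⁻¹) / (2 * √2) + (a * (1 + √2) - (a * (1 + √2))⁻¹) / (2 * √2)) /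
      ((a + a⁻¹) / (2 * √2)) ^ 2
      = 4 * a * ((3 + 2 * √2) * a ^ 2 + 1) / ((1 + √2) * (a ^ 2 + 1) ^ 2) := by
    field_simp
    linear_combination (2 + 6 * a ^ 2 + 2 * √2 * a ^ 2) * hc
  rw [e, div_sub_div _ _ ha0.ne' (by positivity), div_le_div_iff₀ (by positivity) (by positivity)]
  have key : 0 ≤ (15 + 12 * √2) * a ^ 4 + 2 * a ^ 2 - (5 + 4 * √2) := by
    nlinarith [one_le_pow₀ (n := 4) ha, one_lt_sqrt_two]
  linear_combination mul_nonneg ha0.le key + (a - 4 * a ^ 3) * (a ^ 2 + 1) ^ 2 * hc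

lemma pellTerm_le_of_even {n : ℕ} (hn : Even n) (hn0 : n ≠ 0) :
    pellTerm n ≤ 4 * (1 + √2) / (1 + √2) ^ n + (31 + 22 * √2) / ((1 + √2) ^ n) ^ 3 := by
  have hb : 4 ≤ (1 + √2) ^ n :=
    calc (4 : ℝ) = 2 ^ 2 := by norm_num
      _ ≤ 2 ^ n := pow_le_pow_right₀ one_le_two (by rcases hn with ⟨k, rfl⟩; omega)
      _ ≤ (1 + √2) ^ n := pow_le_pow_left₀ zero_le_two (by linarith [one_lt_sqrt_two]) n
  rw [pellTerm, pell_eq, pell_eq, hn.neg_one_pow, hn.add_one.neg_one_pow, pow_succ]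
  simp only [neg_one_mul, sub_neg_eq_add, one_mul]
  generalize (1 + √2) ^ n = b at hb ⊢
  have hc : √2 ^ 2 = 2 := sq_sqrt zero_le_two
  have hb0 : 0 < b := by linarith
  have hb2 : 16 ≤ b ^ 2 := by nlinarith
  have hb1 : b ^ 2 - 1 ≠ 0 := by linarith
  have e : ((b - b⁻¹) / (2 * √2) + (b * (1 + √2) + (b * (1 + √2))⁻¹) / (2 * √2)) /
      ((b - b⁻¹) / (2 * √2)) ^ 2
      = 4 * b * ((3 + 2 * √2) * b ^ 2 - 1) / ((1 + √2) * (b ^ 2 - 1) ^ 2) := by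
    field_simp
    linear_combination (-2 + 6 * b ^ 2 + 2 * √2 * b ^ 2) * hc
  rw [e, div_add_div _ _ hb0.ne' (by positivity), div_le_div_iff₀ (by positivity) (by positivity)]
  have key : 0 ≤ (55 + 37 * √2) * b ^ 4 - (138 + 98 * √2) * b ^ 2 + (75 + 53 * √2) := by
    nlinarith [mul_nonneg (mul_nonneg (by positivity : (0 : ℝ) ≤ 55 + 37 * √2) (sub_nonneg.2 hb2))
      (sq_nonneg b)]
  linear_combination mul_nonneg hb0.le key - (4 * b ^ 7 + 14 * b ^ 5 - 40 * b ^ 3 + 22 * b) * hc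

lemma pellTerm_add_pellTerm_succ_le {n : ℕ} (hn : Odd n) :
    pellTerm n + pellTerm (n + 1) ≤ 4 * (2 + √2) / (1 + √2) ^ n := by
  refine (add_le_add (pellTerm_le_of_odd hn) (pellTerm_le_of_even hn.add_one n.succ_ne_zero)).trans
    (le_of_eq ?_)
  rw [pow_succ (1 + √2) n]
  have ha : 0 < (1 + √2) ^ n := by positivity
  generalize (1 + √2) ^ n = a at ha ⊢
  field_simp
  -- `(3 + √2) (1 + √2)³ = 31 + 22√2`, so the cubic error terms cancel.
  linear_combination (-(√2 ^ 2 + 6 * √2 + 14)) * sq_sqrt zero_le_two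

lemma tsum_le_tsum_of_even_add_odd_le {f g : ℕ → ℝ} (hf : ∀ i, 0 ≤ f i) (hg : Summable g)
    (h : ∀ k, f (2 * k) + f (2 * k + 1) ≤ g k) : ∑' i, f i ≤ ∑' k, g k := by
  have he : Summable fun k ↦ f (2 * k) :=
    .of_nonneg_of_le (fun k ↦ hf _) (fun k ↦ by linarith [hf (2 * k + 1), h k]) hg
  have ho : Summable fun k ↦ f (2 * k + 1) :=
    .of_nonneg_of_le (fun k ↦ hf _) (fun k ↦ by linarith [hf (2 * k), h k]) hg
  rw [← tsum_even_add_odd he ho, ← he.tsum_add ho]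
  exact (he.add ho).tsum_le_tsum h hg

lemma tsum_pellTerm_le (j : ℕ) :
    ∑' i, pellTerm (2 * j + 1 + i) ≤ 2 * (2 + √2) / (1 + √2) ^ (2 * j) := by
  have hr : 1 < 1 + √2 := lt_add_of_pos_right 1 (sqrt_pos.2 two_pos)
  set q := ((1 + √2) ^ 2)⁻¹ with hq
  have hq0 : 0 ≤ q := by positivity
  have hq1 : q < 1 := inv_lt_one_of_one_lt₀ (one_lt_pow₀ hr two_ne_zero)
  calc ∑' i, pellTerm (2 * j + 1 + i)
      ≤ ∑' k, 4 * (2 + √2) / (1 + √2) ^ (2 * j + 1) * q ^ k := by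
        refine tsum_le_tsum_of_even_add_odd_le (fun i ↦ pellTerm_nonneg _)
          ((summable_geometric_of_lt_one hq0 hq1).mul_left _) fun k ↦ ?_
        have hodd : Odd (2 * j + 1 + 2 * k) := ⟨j + k, by ring⟩
        rw [← add_assoc]
        refine (pellTerm_add_pellTerm_succ_le hodd).trans_eq ?_
        rw [hq, inv_pow, ← pow_mul, pow_add _ (2 * j + 1)]
        field_simp
    _ = 2 * (2 + √2) / (1 + √2) ^ (2 * j) := by
        have h1q : 1 - q = 2 * (1 + √2) * q := by
          rw [hq]
          field_simp
          linear_combination sq_sqrt zero_le_two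
        rw [tsum_mul_left, tsum_geometric_of_lt_one hq0 hq1, h1q, pow_succ]
        field_simp
        rw [hq, div_inv_eq_mul]
        ring

theorem stmt_4_general (j : ℕ) :
    ∑' i : ℕ, ((pell (2*j+1+i) : ℝ) + (pell (2*j+2+i) : ℝ)) / (pell (2*j+1+i) : ℝ) ^ 2
      < 2 * (2 + Real.sqrt 2) / (1 + Real.sqrt 2) ^ (2*j)
        + 1 / (8 * (1 + Real.sqrt 2) ^ (6*j)) := by
  have hterm (i : ℕ) : ((pell (2*j+1+i) : ℝ) + (pell (2*j+2+i) : ℝ)) / (pell (2*j+1+i) : ℝ) ^ 2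
      = pellTerm (2 * j + 1 + i) := by
    rw [pellTerm, show 2 * j + 2 + i = 2 * j + 1 + i + 1 by ring]
  rw [tsum_congr hterm]
  exact (tsum_pellTerm_le j).trans_lt (lt_add_of_pos_right _ (by positivity))

theorem stmt_4 (j : ℕ) (hj : 1 ≤ j) :
    ∑' i : ℕ, ((pell (2*j+1+i) : ℝ) + (pell (2*j+2+i) : ℝ)) / (pell (2*j+1+i) : ℝ) ^ 2
      < 2 * (2 + Real.sqrt 2) / (1 + Real.sqrt 2) ^ (2*j)
        + 1 / (8 * (1 + Real.sqrt 2) ^ (6*j)) :=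
  stmt_4_general j
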